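/- In a cartesian bicategory of relations, if R, S : X ⟶ Y are both maps (single-valued and total) and R ≤ S, then R = S. -/

import Mathlib

open CategoryTheory MonoidalCategory

universe v u

/-- A cartesian bicategory of relations: a poset-enriched symmetric monoidal category
in which every object carries a cocommutative comonoid `(dup, del)` and a commutative
monoid `(mrg, bng)`, compatible with the monoidal structure, satisfying the adjunction
inequalities and the Frobenius law, and such that every morphism is a lax comonoid
homomorphism. -/
class CartesianBicatRel (C : Type u) [Category.{v} C] [MonoidalCategory C]
    [SymmetricCategory C] [∀ X Y : C, PartialOrder (X ⟶ Y)] where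
  comp_mono : ∀ {X Y Z : C} {f f' : X ⟶ Y} {g g' : Y ⟶ Z},
    f ≤ f' → g ≤ g' → f ≫ g ≤ f' ≫ g'
  tensor_mono : ∀ {X X' Y Y' : C} {f f' : X ⟶ X'} {g g' : Y ⟶ Y'},
    f ≤ f' → g ≤ g' → (f ⊗ₘ g) ≤ (f' ⊗ₘ g')
  /-- comultiplication Δ -/
  dup : ∀ X : C, X ⟶ X ⊗ X
  /-- counit ! -/
  del : ∀ X : C, X ⟶ 𝟙_ C
  /-- multiplication ∇ -/
  mrg : ∀ X : C, X ⊗ X ⟶ X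
  /-- unit ? -/
  bng : ∀ X : C, 𝟙_ C ⟶ X
  dup_coassoc : ∀ X : C, dup X ≫ (dup X ▷ X) ≫ (α_ X X X).hom = dup X ≫ (X ◁ dup X)
  dup_del_left : ∀ X : C, dup X ≫ (del X ▷ X) = (λ_ X).inv
  dup_del_right : ∀ X : C, dup X ≫ (X ◁ del X) = (ρ_ X).inv
  dup_cocomm : ∀ X : C, dup X ≫ (β_ X X).hom = dup X
  mrg_assoc : ∀ X : C, (mrg X ▷ X) ≫ mrg X = (α_ X X X).hom ≫ (X ◁ mrg X) ≫ mrg X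
  mrg_bng_left : ∀ X : C, (bng X ▷ X) ≫ mrg X = (λ_ X).hom
  mrg_bng_right : ∀ X : C, (X ◁ bng X) ≫ mrg X = (ρ_ X).hom
  mrg_comm : ∀ X : C, (β_ X X).hom ≫ mrg X = mrg X
  dup_tensor : ∀ X Y : C, dup (X ⊗ Y) = (dup X ⊗ₘ dup Y) ≫ tensorμ X X Y Y
  del_tensor : ∀ X Y : C, del (X ⊗ Y) = (del X ⊗ₘ del Y) ≫ (λ_ (𝟙_ C)).hom
  dup_unitObj : dup (𝟙_ C) = (λ_ (𝟙_ C)).inv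
  del_unitObj : del (𝟙_ C) = 𝟙 (𝟙_ C)
  mrg_tensor : ∀ X Y : C, mrg (X ⊗ Y) = tensorμ X Y X Y ≫ (mrg X ⊗ₘ mrg Y)
  bng_tensor : ∀ X Y : C, bng (X ⊗ Y) = (λ_ (𝟙_ C)).inv ≫ (bng X ⊗ₘ bng Y)
  mrg_unitObj : mrg (𝟙_ C) = (λ_ (𝟙_ C)).hom
  bng_unitObj : bng (𝟙_ C) = 𝟙 (𝟙_ C)
  adj_dup_unit : ∀ X : C, 𝟙 X ≤ dup X ≫ mrg X
  adj_dup_counit : ∀ X : C, mrg X ≫ dup X ≤ 𝟙 (X ⊗ X)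
  adj_del_counit : ∀ X : C, bng X ≫ del X ≤ 𝟙 (𝟙_ C)
  adj_del_unit : ∀ X : C, 𝟙 X ≤ del X ≫ bng X
  frob_left : ∀ X : C, (dup X ▷ X) ≫ (α_ X X X).hom ≫ (X ◁ mrg X) = mrg X ≫ dup X
  frob_right : ∀ X : C, (X ◁ dup X) ≫ (α_ X X X).inv ≫ (mrg X ▷ X) = mrg X ≫ dup X
  lax_dup : ∀ {X Y : C} (R : X ⟶ Y), R ≫ dup Y ≤ dup X ≫ (R ⊗ₘ R)
  lax_del : ∀ {X Y : C} (R : X ⟶ Y), R ≫ del Y ≤ del X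

namespace CartesianBicatRel

variable {C : Type u} [Category.{v} C] [MonoidalCategory C] [SymmetricCategory C]
  [∀ X Y : C, PartialOrder (X ⟶ Y)] [CartesianBicatRel C]

/-- The dagger `R† : Y ⟶ X` of `R : X ⟶ Y`, built from the cup `η_X = ?;Δ` and
the cap `ε_Y = ∇;!`. -/
def dagger {X Y : C} (R : X ⟶ Y) : Y ⟶ X :=
  (λ_ Y).inv ≫ ((bng X ≫ dup X) ▷ Y) ≫ (α_ X X Y).hom ≫
    (X ◁ (R ▷ Y)) ≫ (X ◁ (mrg Y ≫ del Y)) ≫ (ρ_ X).hom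

/-- `R` is single-valued. -/
def SingleValued {X Y : C} (R : X ⟶ Y) : Prop := dup X ≫ (R ⊗ₘ R) ≤ R ≫ dup Y

/-- `R` is total. -/
def Total {X Y : C} (R : X ⟶ Y) : Prop := del X ≤ R ≫ del Y

/-- `R` is injective. -/
def Injective {X Y : C} (R : X ⟶ Y) : Prop := (R ⊗ₘ R) ≫ mrg Y ≤ mrg X ≫ R

/-- `R` is surjective. -/
def Surjective {X Y : C} (R : X ⟶ Y) : Prop := bng Y ≤ bng X ≫ R

/-- A map is a single-valued and total morphism. -/
def IsMap {X Y : C} (R : X ⟶ Y) : Prop := SingleValued R ∧ Total R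

/-- A comap is an injective and surjective morphism. -/
def IsComap {X Y : C} (R : X ⟶ Y) : Prop := Injective R ∧ Surjective R

end CartesianBicatRel

/-!
If `R` is total then `∇;! ≤ (R ⊗ R);∇;!`, and if `R` is single-valued then
`?;Δ;(R ⊗ R) ≤ ?;Δ`; here one uses that, by the adjunctions, every morphism is a lax monoid
homomorphism in the opposite direction. Feeding these into the snake identity for the cup `?;Δ`
and the cap `∇;!` gives `1 ≤ R;R†` for total `R` and `R†;R ≤ 1` for single-valued `R`.
Since the dagger is monotone, maps `R ≤ S` satisfy `S ≤ R;R†;S ≤ R;S†;S ≤ R`.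
-/

namespace CartesianBicatRel

variable {C : Type u} [Category.{v} C] [MonoidalCategory C] [SymmetricCategory C]
  [∀ X Y : C, PartialOrder (X ⟶ Y)] [CartesianBicatRel C]

theorem whiskerLeft_mono (X : C) {Y Z : C} {f g : Y ⟶ Z} (h : f ≤ g) : X ◁ f ≤ X ◁ g := by
  simpa only [id_tensorHom] using tensor_mono (le_refl (𝟙 X)) h

theorem whiskerRight_mono {X Y : C} {f g : X ⟶ Y} (h : f ≤ g) (Z : C) : f ▷ Z ≤ g ▷ Z := by
  simpa only [tensorHom_id] using tensor_mono h (le_refl (𝟙 Z))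

theorem mrg_comp_le {X Y : C} (R : X ⟶ Y) : mrg X ≫ R ≤ (R ⊗ₘ R) ≫ mrg Y :=
  calc mrg X ≫ R = mrg X ≫ R ≫ 𝟙 Y := by simp
    _ ≤ mrg X ≫ R ≫ dup Y ≫ mrg Y :=
        comp_mono le_rfl (comp_mono le_rfl (adj_dup_unit Y))
    _ ≤ mrg X ≫ dup X ≫ (R ⊗ₘ R) ≫ mrg Y := by
        simpa only [Category.assoc] using comp_mono le_rfl (comp_mono (lax_dup R) le_rfl)
    _ ≤ 𝟙 (X ⊗ X) ≫ (R ⊗ₘ R) ≫ mrg Y := by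
        simpa only [Category.assoc] using comp_mono (adj_dup_counit X) le_rfl
    _ = (R ⊗ₘ R) ≫ mrg Y := Category.id_comp _

theorem bng_comp_le {X Y : C} (R : X ⟶ Y) : bng X ≫ R ≤ bng Y :=
  calc bng X ≫ R = bng X ≫ R ≫ 𝟙 Y := by simp
    _ ≤ bng X ≫ R ≫ del Y ≫ bng Y :=
        comp_mono le_rfl (comp_mono le_rfl (adj_del_unit Y))
    _ ≤ bng X ≫ del X ≫ bng Y := by
        simpa only [Category.assoc] using comp_mono le_rfl (comp_mono (lax_del R) le_rfl)
    _ ≤ 𝟙 (𝟙_ C) ≫ bng Y := by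
        simpa only [Category.assoc] using comp_mono (adj_del_counit X) le_rfl
    _ = bng Y := Category.id_comp _

def zigzag {X : C} (η : 𝟙_ C ⟶ X ⊗ X) (ε : X ⊗ X ⟶ 𝟙_ C) : X ⟶ X :=
  (λ_ X).inv ≫ (η ▷ X) ≫ (α_ X X X).hom ≫ (X ◁ ε) ≫ (ρ_ X).hom

theorem zigzag_mono {X : C} {η η' : 𝟙_ C ⟶ X ⊗ X} {ε ε' : X ⊗ X ⟶ 𝟙_ C}
    (hη : η ≤ η') (hε : ε ≤ ε') : zigzag η ε ≤ zigzag η' ε' :=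
  comp_mono le_rfl (comp_mono (whiskerRight_mono hη X)
    (comp_mono le_rfl (comp_mono (whiskerLeft_mono X hε) le_rfl)))

theorem zigzag_cup_cap (X : C) : zigzag (bng X ≫ dup X) (mrg X ≫ del X) = 𝟙 X :=
  calc zigzag (bng X ≫ dup X) (mrg X ≫ del X)
      = (λ_ X).inv ≫ (bng X ▷ X) ≫ ((dup X ▷ X) ≫ (α_ X X X).hom ≫ (X ◁ mrg X)) ≫
          (X ◁ del X) ≫ (ρ_ X).hom := by
        simp only [zigzag, comp_whiskerRight, whiskerLeft_comp, Category.assoc]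
    _ = (λ_ X).inv ≫ ((bng X ▷ X) ≫ mrg X) ≫ (dup X ≫ (X ◁ del X)) ≫ (ρ_ X).hom := by
        rw [frob_left]; simp only [Category.assoc]
    _ = 𝟙 X := by rw [mrg_bng_left, dup_del_right]; simp

theorem comp_dagger {X Y : C} (R : X ⟶ Y) :
    R ≫ dagger R = zigzag (bng X ≫ dup X) ((R ⊗ₘ R) ≫ mrg Y ≫ del Y) := by
  simp only [dagger, zigzag, comp_whiskerRight, whiskerLeft_comp, Category.assoc]
  rw [leftUnitor_inv_naturality_assoc, whisker_exchange_assoc, whisker_exchange_assoc,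
    associator_naturality_right_assoc, ← whiskerLeft_comp_assoc, ← tensorHom_def']

theorem dagger_comp {X Y : C} (R : X ⟶ Y) :
    dagger R ≫ R = zigzag (bng X ≫ dup X ≫ (R ⊗ₘ R)) (mrg Y ≫ del Y) := by
  simp only [dagger, zigzag, comp_whiskerRight, whiskerLeft_comp, Category.assoc]
  rw [← rightUnitor_naturality, whisker_exchange_assoc, whisker_exchange_assoc,
    whisker_exchange_assoc, ← associator_naturality_left_assoc,
    ← associator_naturality_middle_assoc, ← comp_whiskerRight_assoc (R ▷ X) (Y ◁ R) Y,
    ← MonoidalCategory.tensorHom_def]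

theorem dagger_mono {X Y : C} {R S : X ⟶ Y} (h : R ≤ S) : dagger R ≤ dagger S :=
  comp_mono le_rfl (comp_mono le_rfl (comp_mono le_rfl
    (comp_mono (whiskerLeft_mono X (whiskerRight_mono h Y)) le_rfl)))

theorem Total.cap_le {X Y : C} {R : X ⟶ Y} (hR : Total R) :
    mrg X ≫ del X ≤ (R ⊗ₘ R) ≫ mrg Y ≫ del Y :=
  calc mrg X ≫ del X ≤ mrg X ≫ R ≫ del Y := comp_mono le_rfl hR
    _ ≤ (R ⊗ₘ R) ≫ mrg Y ≫ del Y := by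
        simpa only [Category.assoc] using comp_mono (mrg_comp_le R) (le_refl (del Y))

theorem SingleValued.cup_le {X Y : C} {R : X ⟶ Y} (hR : SingleValued R) :
    bng X ≫ dup X ≫ (R ⊗ₘ R) ≤ bng Y ≫ dup Y :=
  calc bng X ≫ dup X ≫ (R ⊗ₘ R) ≤ bng X ≫ R ≫ dup Y := comp_mono le_rfl hR
    _ ≤ bng Y ≫ dup Y := by
        simpa only [Category.assoc] using comp_mono (bng_comp_le R) (le_refl (dup Y))

theorem Total.id_le_comp_dagger {X Y : C} {R : X ⟶ Y} (hR : Total R) :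
    𝟙 X ≤ R ≫ dagger R := by
  rw [← zigzag_cup_cap X, comp_dagger]
  exact zigzag_mono le_rfl hR.cap_le

theorem SingleValued.dagger_comp_le_id {X Y : C} {R : X ⟶ Y} (hR : SingleValued R) :
    dagger R ≫ R ≤ 𝟙 Y := by
  rw [← zigzag_cup_cap Y, dagger_comp]
  exact zigzag_mono hR.cup_le le_rfl

end CartesianBicatRel

open CartesianBicatRel in
/-- Comparable maps are equal. -/
theorem maps_le_eq {C : Type u} [Category.{v} C] [MonoidalCategory C]
    [SymmetricCategory C] [∀ X Y : C, PartialOrder (X ⟶ Y)] [CartesianBicatRel C]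
    {X Y : C} (R S : X ⟶ Y) (hR : IsMap R) (hS : IsMap S) (h : R ≤ S) : R = S := by
  refine le_antisymm h ?_
  calc S = 𝟙 X ≫ S := (Category.id_comp S).symm
    _ ≤ (R ≫ dagger R) ≫ S := comp_mono hR.2.id_le_comp_dagger le_rfl
    _ ≤ R ≫ dagger S ≫ S := by
        simpa only [Category.assoc] using comp_mono (comp_mono (le_refl R) (dagger_mono h)) le_rfl
    _ ≤ R ≫ 𝟙 Y := comp_mono le_rfl hS.1.dagger_comp_le_id
    _ = R := Category.comp_id R
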